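/- arXiv:2602.20793 — 6 statements merged into one kernel-verified Lean document; each statement's English description precedes it below -/
import Mathlib

section
/- Let A ∈ ℝ^(m×n), b ∈ ℝ^m, and bounds lb, ub ∈ ℤ^n with lb ≤ ub. Let u, v ∈ ℝ^k be two partial assignments of x_1,…,x_k, each within the bounds, whose monotonic constraint residual vectors agree: for every constraint i, b_i − Σ_{j≤k} a_{ij} u_j − Σ_{j>k} a_{ij}·anchor_{ij} = b_i − Σ_{j≤k} a_{ij} v_j − Σ_{j>k} a_{ij}·anchor_{ij}. Then for every completion y = (x_{k+1},…,x_n) with lb_j ≤ x_j ≤ ub_j for j > k, the full assignment (u, y) satisfies A x ≤ b if and only if (v, y) satisfies A x ≤ b. In other words, two nodes with identical residual vectors have exactly the same set of feasible completions, so merging them preserves the set of feasible solutions. -/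
open Finset

/-- Two partial assignments (of the first `k` variables, within
bounds) with identical monotonic constraint residual vectors have exactly the
same set of feasible completions: for every completion `y` within the bounds,
`(u, y)` satisfies `A x ≤ b` iff `(v, y)` does. -/
theorem equal_residuals_same_feasible_completions
    (m n : ℕ) (A : Matrix (Fin m) (Fin n) ℝ) (b : Fin m → ℝ)
    (lb ub : Fin n → ℤ) (hbounds : ∀ j, lb j ≤ ub j) (k : ℕ) (hk : k ≤ n)
    (anchor : Fin m → Fin n → ℝ)
    (hanchor : ∀ i j, anchor i j = if 0 < A i j then (lb j : ℝ) else (ub j : ℝ))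
    (u v : Fin n → ℝ)
    (hu : ∀ j : Fin n, (j : ℕ) < k → (lb j : ℝ) ≤ u j ∧ u j ≤ (ub j : ℝ))
    (hv : ∀ j : Fin n, (j : ℕ) < k → (lb j : ℝ) ≤ v j ∧ v j ≤ (ub j : ℝ))
    (hres : ∀ i,
      b i - (∑ j ∈ univ.filter (fun j : Fin n => (j : ℕ) < k), A i j * u j)
        - (∑ j ∈ univ.filter (fun j : Fin n => k ≤ (j : ℕ)), A i j * anchor i j)
      = b i - (∑ j ∈ univ.filter (fun j : Fin n => (j : ℕ) < k), A i j * v j)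
        - (∑ j ∈ univ.filter (fun j : Fin n => k ≤ (j : ℕ)), A i j * anchor i j)) :
    ∀ y : Fin n → ℝ,
      (∀ j : Fin n, k ≤ (j : ℕ) → (lb j : ℝ) ≤ y j ∧ y j ≤ (ub j : ℝ)) →
      ((∀ i, ∑ j, A i j * (if (j : ℕ) < k then u j else y j) ≤ b i) ↔
       (∀ i, ∑ j, A i j * (if (j : ℕ) < k then v j else y j) ≤ b i)) := by
  intro y _
  have key : ∀ i, (∑ j, A i j * (if (j : ℕ) < k then u j else y j))
      = ∑ j, A i j * (if (j : ℕ) < k then v j else y j) := by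
    intro i
    have huv : (∑ j ∈ univ.filter (fun j : Fin n => (j : ℕ) < k), A i j * u j)
        = ∑ j ∈ univ.filter (fun j : Fin n => (j : ℕ) < k), A i j * v j := by
      have := hres i; linarith
    have split : ∀ w : Fin n → ℝ,
        (∑ j, A i j * (if (j : ℕ) < k then w j else y j))
        = (∑ j ∈ univ.filter (fun j : Fin n => (j : ℕ) < k), A i j * w j)
          + ∑ j ∈ univ.filter (fun j : Fin n => ¬ (j : ℕ) < k), A i j * y j := by
      intro w
      rw [← Finset.sum_filter_add_sum_filter_not univ (fun j : Fin n => (j : ℕ) < k)]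
      congr 1
      · exact Finset.sum_congr rfl fun j hj => by
          simp only [Finset.mem_filter] at hj; rw [if_pos hj.2]
      · exact Finset.sum_congr rfl fun j hj => by
          simp only [Finset.mem_filter] at hj; rw [if_neg hj.2]
    rw [split u, split v, huv]
  constructor <;> intro h i
  · rw [← key i]; exact h i
  · rw [key i]; exact h i
end

section
/- Let A ∈ ℝ^(m×n), b ∈ ℝ^m, c ∈ ℝ^n, and bounds lb, ub ∈ ℤ^n with lb ≤ ub. Let u, v ∈ ℝ^k be partial assignments of x_1,…,x_k within the bounds, with identical monotonic constraint residual vectors, and suppose the prefix objective satisfies Σ_{j≤k} c_j u_j ≤ Σ_{j≤k} c_j v_j. Then for every completion y with lb_j ≤ y_j ≤ ub_j (j > k) such that (v, y) satisfies A x ≤ b, the assignment (u, y) also satisfies A x ≤ b and has objective value Σ_j c_j (u,y)_j ≤ Σ_j c_j (v,y)_j. Hence, when merging nodes with identical residuals, keeping only the node with minimal objective value preserves the optimal value of the integer program. -/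
open Finset

/-- If two partial assignments `u, v` (within bounds) have
identical monotonic constraint residual vectors and the prefix objective of `u`
is at most that of `v`, then every feasible completion of `v` is also a
feasible completion of `u` with objective value at most that of `(v, y)`.
Hence keeping only the merged node with minimal objective value preserves the
optimal value of the integer program. -/
theorem merge_keep_min_objective_preserves_optimum
    (m n : ℕ) (A : Matrix (Fin m) (Fin n) ℝ) (b : Fin m → ℝ) (c : Fin n → ℝ)
    (lb ub : Fin n → ℤ) (hbounds : ∀ j, lb j ≤ ub j) (k : ℕ) (hk : k ≤ n)
    (anchor : Fin m → Fin n → ℝ)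
    (hanchor : ∀ i j, anchor i j = if 0 < A i j then (lb j : ℝ) else (ub j : ℝ))
    (u v : Fin n → ℝ)
    (hu : ∀ j : Fin n, (j : ℕ) < k → (lb j : ℝ) ≤ u j ∧ u j ≤ (ub j : ℝ))
    (hv : ∀ j : Fin n, (j : ℕ) < k → (lb j : ℝ) ≤ v j ∧ v j ≤ (ub j : ℝ))
    (hres : ∀ i,
      b i - (∑ j ∈ univ.filter (fun j : Fin n => (j : ℕ) < k), A i j * u j)
        - (∑ j ∈ univ.filter (fun j : Fin n => k ≤ (j : ℕ)), A i j * anchor i j)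
      = b i - (∑ j ∈ univ.filter (fun j : Fin n => (j : ℕ) < k), A i j * v j)
        - (∑ j ∈ univ.filter (fun j : Fin n => k ≤ (j : ℕ)), A i j * anchor i j))
    (hobj : (∑ j ∈ univ.filter (fun j : Fin n => (j : ℕ) < k), c j * u j)
      ≤ ∑ j ∈ univ.filter (fun j : Fin n => (j : ℕ) < k), c j * v j) :
    ∀ y : Fin n → ℝ,
      (∀ j : Fin n, k ≤ (j : ℕ) → (lb j : ℝ) ≤ y j ∧ y j ≤ (ub j : ℝ)) →
      (∀ i, ∑ j, A i j * (if (j : ℕ) < k then v j else y j) ≤ b i) →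
      ((∀ i, ∑ j, A i j * (if (j : ℕ) < k then u j else y j) ≤ b i) ∧
       (∑ j, c j * (if (j : ℕ) < k then u j else y j))
         ≤ ∑ j, c j * (if (j : ℕ) < k then v j else y j)) := by
  intro y hy hfeas
  have hsplit : ∀ (f : Fin n → ℝ) (w : Fin n → ℝ),
      (∑ j, f j * (if (j : ℕ) < k then w j else y j))
        = (∑ j ∈ univ.filter (fun j : Fin n => (j : ℕ) < k), f j * w j)
          + ∑ j ∈ univ.filter (fun j : Fin n => ¬ (j : ℕ) < k), f j * y j := by
    intro f w
    rw [← Finset.sum_filter_add_sum_filter_not univ (fun j : Fin n => (j : ℕ) < k)]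
    congr 1
    · exact Finset.sum_congr rfl (fun j hj => by
        simp only [Finset.mem_filter] at hj; rw [if_pos hj.2])
    · exact Finset.sum_congr rfl (fun j hj => by
        simp only [Finset.mem_filter] at hj; rw [if_neg hj.2])
  have hAeq : ∀ i,
      (∑ j ∈ univ.filter (fun j : Fin n => (j : ℕ) < k), A i j * u j)
        = ∑ j ∈ univ.filter (fun j : Fin n => (j : ℕ) < k), A i j * v j := by
    intro i; have := hres i; linarith
  constructor
  · intro i
    rw [hsplit (A i) u, hAeq i, ← hsplit (A i) v]
    exact hfeas i
  · rw [hsplit c u, hsplit c v]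
    linarith
end

section
/- Let A ∈ ℝ^(m×n) and bounds lb, ub ∈ ℤ^n with lb ≤ ub, and fix k. For a residual vector ρ ∈ ℝ^m define the completion-feasible set C(ρ) = { y ∈ ℝ^(n−k) : lb_j ≤ y_j ≤ ub_j for j > k, and for all i, Σ_{j>k} a_{ij} y_j − Σ_{j>k} a_{ij}·anchor_{ij} ≤ ρ_i }. Then: (1) for any partial assignment u of x_1,…,x_k with residual vector r(u), the full assignment (u, y) satisfies A x ≤ b if and only if y ∈ C(r(u)); (2) if ρ ≤ ρ' componentwise then C(ρ) ⊆ C(ρ'). Consequently, for two residual vectors ρ₁, ρ₂, the elementwise maximum satisfies C(max(ρ₁, ρ₂)) ⊇ C(ρ₁) ∪ C(ρ₂); merging nodes by taking elementwise maxima of residuals yields a valid relaxation that loses no feasible completion. -/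
open Finset

/-- For a residual vector `ρ`, let `C ρ` be the set of
completions `y` (within bounds on coordinates `≥ k`) whose suffix contribution
exceeds the anchor contribution by at most `ρ i` in every constraint `i`.
Then (1) for a partial assignment `u` with residual vector `r(u)`, the full
assignment `(u, y)` satisfies `A x ≤ b` iff `y ∈ C (r u)`; (2) `C` is monotone:
`ρ ≤ ρ'` implies `C ρ ⊆ C ρ'`; and consequently (3)
`C ρ₁ ∪ C ρ₂ ⊆ C (max ρ₁ ρ₂)`, so merging by elementwise maxima of residuals
loses no feasible completion. -/
theorem completion_set_residual_characterization_and_monotone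
    (m n : ℕ) (A : Matrix (Fin m) (Fin n) ℝ) (b : Fin m → ℝ)
    (lb ub : Fin n → ℤ) (hbounds : ∀ j, lb j ≤ ub j) (k : ℕ) (hk : k ≤ n)
    (anchor : Fin m → Fin n → ℝ)
    (hanchor : ∀ i j, anchor i j = if 0 < A i j then (lb j : ℝ) else (ub j : ℝ))
    (C : (Fin m → ℝ) → Set (Fin n → ℝ))
    (hC : ∀ ρ, C ρ = {y : Fin n → ℝ |
      (∀ j : Fin n, k ≤ (j : ℕ) → (lb j : ℝ) ≤ y j ∧ y j ≤ (ub j : ℝ)) ∧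
      ∀ i, (∑ j ∈ univ.filter (fun j : Fin n => k ≤ (j : ℕ)), A i j * y j)
        - (∑ j ∈ univ.filter (fun j : Fin n => k ≤ (j : ℕ)), A i j * anchor i j)
        ≤ ρ i}) :
    (∀ u : Fin n → ℝ,
      (∀ j : Fin n, (j : ℕ) < k → (lb j : ℝ) ≤ u j ∧ u j ≤ (ub j : ℝ)) →
      ∀ y : Fin n → ℝ,
        (∀ j : Fin n, k ≤ (j : ℕ) → (lb j : ℝ) ≤ y j ∧ y j ≤ (ub j : ℝ)) →
        ((∀ i, ∑ j, A i j * (if (j : ℕ) < k then u j else y j) ≤ b i) ↔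
          y ∈ C (fun i =>
            b i - (∑ j ∈ univ.filter (fun j : Fin n => (j : ℕ) < k), A i j * u j)
              - (∑ j ∈ univ.filter (fun j : Fin n => k ≤ (j : ℕ)),
                  A i j * anchor i j)))) ∧
    (∀ ρ ρ' : Fin m → ℝ, (∀ i, ρ i ≤ ρ' i) → C ρ ⊆ C ρ') ∧
    (∀ ρ₁ ρ₂ : Fin m → ℝ, C ρ₁ ∪ C ρ₂ ⊆ C (fun i => max (ρ₁ i) (ρ₂ i))) := by
  have hmono : ∀ ρ ρ' : Fin m → ℝ, (∀ i, ρ i ≤ ρ' i) → C ρ ⊆ C ρ' := by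
    intro ρ ρ' hle y hy
    rw [hC] at hy ⊢
    exact ⟨hy.1, fun i => le_trans (hy.2 i) (hle i)⟩
  refine ⟨?_, hmono, fun ρ₁ ρ₂ y hy => ?_⟩
  · intro u hu y hy
    have hsplit : ∀ i, (∑ j, A i j * (if (j : ℕ) < k then u j else y j)) =
        (∑ j ∈ univ.filter (fun j : Fin n => (j : ℕ) < k), A i j * u j)
        + (∑ j ∈ univ.filter (fun j : Fin n => k ≤ (j : ℕ)), A i j * y j) := by
      intro i
      rw [← Finset.sum_filter_add_sum_filter_not univ (fun j : Fin n => (j : ℕ) < k)]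
      congr 1
      · exact Finset.sum_congr rfl (fun j hj => by
          simp only [Finset.mem_filter] at hj; rw [if_pos hj.2])
      · refine Finset.sum_congr ?_ (fun j hj => ?_)
        · ext j; simp [not_lt]
        · simp only [Finset.mem_filter, not_lt] at hj; rw [if_neg (not_lt.mpr hj.2)]
    rw [hC]
    constructor
    · intro h
      refine ⟨hy, fun i => ?_⟩
      have := h i
      rw [hsplit i] at this
      linarith
    · intro h i
      have := h.2 i
      rw [hsplit i]
      linarith
  · rw [hC]
    rcases hy with hy | hy
    · rw [hC] at hy
      exact ⟨hy.1, fun i => le_trans (hy.2 i) (le_max_left _ _)⟩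
    · rw [hC] at hy
      exact ⟨hy.1, fun i => le_trans (hy.2 i) (le_max_right _ _)⟩
end

section
/- (IP exactness of the interval representation, Theorem 1.) Fix a constraint matrix A ∈ ℝ^(m×n), bounds lb, ub ∈ ℤ^n with lb ≤ ub, and a variable index k. Let P be a finite set of parent nodes, each p ∈ P carrying a residual vector r(p) ∈ ℝ^m and an index idx(p) ∈ ℕ with idx injective on P. Define arc (p, l) feasible as: for every i, the updated residual r(p)_i + a_{ik}·(lb_k − l) (if a_{ik} > 0), r(p)_i + a_{ik}·(ub_k − l) (if a_{ik} < 0), or r(p)_i (if a_{ik} = 0) is nonnegative. For each p with at least one feasible integer label, let D[p] be the integer interval [min feasible label, max feasible label]. For each integer label l such that {p ∈ P : l ∈ D[p]} is nonempty, let ψ(l) = min{idx(p) : l ∈ D[p]} and φ(l) = max{idx(p) : l ∈ D[p]}. Then for every such p and l: arc (p, l) is feasible if and only if ψ(l) ≤ idx(p) ≤ φ(l) and l ∈ D[p]. -/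
/-- IP exactness of the interval representation, Theorem 1:
With each parent `p` storing its feasible label interval `D p` (the integer
interval between its least and greatest feasible labels, empty if no feasible
label exists), and each label `l` storing the inverted interval `[ψ l, φ l]`
of parent indices (least and greatest index of a parent whose interval
contains `l`), an arc `(p, l)` is feasible iff
`ψ l ≤ idx p ≤ φ l` and `l ∈ D p`. -/
theorem interval_representation_exact
    {α : Type*} (m n : ℕ) (A : Matrix (Fin m) (Fin n) ℝ)
    (lb ub : Fin n → ℤ) (hbounds : ∀ j, lb j ≤ ub j) (k : Fin n)
    (P : Finset α) (r : α → Fin m → ℝ) (idx : α → ℕ)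
    (hidx : Set.InjOn idx ↑P)
    (feasible : α → ℤ → Prop)
    (hfeas : ∀ p l, feasible p l ↔ ∀ i, 0 ≤
      (if 0 < A i k then r p i + A i k * ((lb k : ℝ) - (l : ℝ))
       else if A i k < 0 then r p i + A i k * ((ub k : ℝ) - (l : ℝ))
       else r p i))
    (lo hi : α → ℤ)
    (hlo : ∀ p ∈ P, (∃ l, feasible p l) → IsLeast {l | feasible p l} (lo p))
    (hhi : ∀ p ∈ P, (∃ l, feasible p l) → IsGreatest {l | feasible p l} (hi p))
    (D : α → Set ℤ)
    (hD : ∀ p ∈ P, ((∃ l, feasible p l) → D p = Set.Icc (lo p) (hi p)) ∧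
      ((¬ ∃ l, feasible p l) → D p = ∅))
    (ψ φ : ℤ → ℕ)
    (hψ : ∀ l : ℤ, {p ∈ (P : Set α) | l ∈ D p}.Nonempty →
      IsLeast {i : ℕ | ∃ p ∈ P, l ∈ D p ∧ idx p = i} (ψ l))
    (hφ : ∀ l : ℤ, {p ∈ (P : Set α) | l ∈ D p}.Nonempty →
      IsGreatest {i : ℕ | ∃ p ∈ P, l ∈ D p ∧ idx p = i} (φ l)) :
    ∀ p ∈ P, ∀ l : ℤ, {q ∈ (P : Set α) | l ∈ D q}.Nonempty →
      (feasible p l ↔ (ψ l ≤ idx p ∧ idx p ≤ φ l ∧ l ∈ D p)) := by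
  intro p hp l hne
  constructor
  · intro hf
    have hex : ∃ l, feasible p l := ⟨l, hf⟩
    have hlo' := hlo p hp hex
    have hhi' := hhi p hp hex
    have hDp : D p = Set.Icc (lo p) (hi p) := (hD p hp).1 hex
    have hlD : l ∈ D p := by
      rw [hDp]
      exact ⟨hlo'.2 hf, hhi'.2 hf⟩
    refine ⟨(hψ l hne).2 ⟨p, hp, hlD, rfl⟩, (hφ l hne).2 ⟨p, hp, hlD, rfl⟩, hlD⟩
  · rintro ⟨-, -, hlD⟩
    have hex : ∃ l, feasible p l := by
      by_contra h
      rw [(hD p hp).2 h] at hlD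
      exact hlD
    have hlo' := hlo p hp hex
    have hhi' := hhi p hp hex
    have hDp : D p = Set.Icc (lo p) (hi p) := (hD p hp).1 hex
    rw [hDp] at hlD
    obtain ⟨h1, h2⟩ := hlD
    have h1' : (lo p : ℝ) ≤ (l : ℝ) := by exact_mod_cast h1
    have h2' : (l : ℝ) ≤ (hi p : ℝ) := by exact_mod_cast h2
    have hflo := (hfeas p (lo p)).1 hlo'.1
    have hfhi := (hfeas p (hi p)).1 hhi'.1
    rw [hfeas]
    intro i
    have hi1 := hflo i
    have hi2 := hfhi i
    rcases lt_trichotomy (A i k) 0 with hA | hA | hA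
    · simp only [if_neg (not_lt.mpr hA.le), if_pos hA] at hi1 ⊢
      have : A i k * ((ub k : ℝ) - l) ≥ A i k * ((ub k : ℝ) - (lo p : ℝ)) := by
        apply mul_le_mul_of_nonpos_left _ hA.le
        linarith
      linarith
    · simp [hA] at hi1 ⊢
      exact hi1
    · simp only [if_pos hA] at hi2 ⊢
      have : A i k * ((lb k : ℝ) - l) ≥ A i k * ((lb k : ℝ) - (hi p : ℝ)) := by
        apply mul_le_mul_of_nonneg_left _ hA.le
        linarith
      linarith
end

section
/- Let S be a finite set, w ≥ 1 a natural number, and bin : S → ℕ a function with 1 ≤ bin(a) ≤ w for all a ∈ S. Define τ = max{ j ∈ {0, 1, …, w} : |{a ∈ S : bin(a) ≤ j}| ≤ w } (well-defined since j = 0 qualifies). Then there exists a subset T ⊆ S such that {a ∈ S : bin(a) ≤ τ} ⊆ T ⊆ {a ∈ S : bin(a) ≤ τ + 1} and |T| = min(w, |S|). In particular, when the number of arcs exceeds w the two-zone procedure selects exactly w arcs, and otherwise it keeps all arcs. -/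
/-- Two-zone selection. With bins `1, …, w` and threshold `τ`
the largest `j ≤ w` for which the number of arcs in bins `≤ j` is at most `w`,
there is a selection `T` containing all arcs in bins `≤ τ` (the baseline zone),
contained in the arcs in bins `≤ τ + 1`, with `|T| = min w |S|`: exactly `w`
arcs are selected when more than `w` are available, and all arcs otherwise. -/
theorem two_zone_selection_exists
    {α : Type*} (S : Finset α) (w : ℕ) (hw : 1 ≤ w)
    (bin : α → ℕ) (hbin : ∀ a ∈ S, 1 ≤ bin a ∧ bin a ≤ w)
    (τ : ℕ)
    (hτ : IsGreatest
      {j : ℕ | j ≤ w ∧ (S.filter (fun a => bin a ≤ j)).card ≤ w} τ) :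
    ∃ T ⊆ S,
      S.filter (fun a => bin a ≤ τ) ⊆ T ∧
      T ⊆ S.filter (fun a => bin a ≤ τ + 1) ∧
      T.card = min w S.card := by
  classical
  obtain ⟨⟨hτw, hcard⟩, hmax⟩ := hτ
  rcases eq_or_lt_of_le hτw with h | h
  · -- τ = w : all of S is in the baseline zone
    have hfull : S.filter (fun a => bin a ≤ τ) = S := by
      apply Finset.filter_true_of_mem
      intro a ha; exact h ▸ (hbin a ha).2
    refine ⟨S, le_refl _, ?_, ?_, ?_⟩
    · rw [hfull]
    · intro a ha
      simp only [Finset.mem_filter] at *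
      exact ⟨ha, by have := (hbin a ha).2; omega⟩
    · rw [hfull] at hcard
      omega
  · -- τ < w : τ+1 fails the condition, so filter ≤ τ+1 has card > w
    have hfail : ¬ ((τ + 1) ≤ w ∧ (S.filter (fun a => bin a ≤ τ + 1)).card ≤ w) := by
      intro hc
      have := hmax hc
      omega
    have hB : w < (S.filter (fun a => bin a ≤ τ + 1)).card := by
      by_contra hc
      exact hfail ⟨h, by omega⟩
    have hsub : S.filter (fun a => bin a ≤ τ) ⊆ S.filter (fun a => bin a ≤ τ + 1) := by
      intro a ha
      simp only [Finset.mem_filter] at *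
      exact ⟨ha.1, by omega⟩
    obtain ⟨T, hT1, hT2, hT3⟩ :=
      Finset.exists_subsuperset_card_eq hsub hcard (le_of_lt hB)
    have hSw : w ≤ S.card := le_trans (le_of_lt hB) (Finset.card_le_card (Finset.filter_subset _ _))
    refine ⟨T, hT2.trans (Finset.filter_subset _ _), hT1, hT2, ?_⟩
    omega
end

section
/- Consider a mixed-integer program min c_I·x_I + c_C·x_C subject to A_I x_I + A_C x_C ≤ b, lb_I ≤ x_I ≤ ub_I with x_I ∈ ℤ^{n_I}, and lb_C ≤ x_C ≤ ub_C with x_C ∈ ℝ^{n_C}. Suppose L ∈ ℝ and ρ ∈ ℝ^m satisfy, for every feasible solution (x_I, x_C): L ≤ c_I·x_I, and b − A_I x_I ≤ ρ componentwise. Let z*_LP = inf{ c_C·y : A_C y ≤ ρ, lb_C ≤ y ≤ ub_C }. Then for every feasible solution (x_I, x_C) of the MIP, L + z*_LP ≤ c_I·x_I + c_C·x_C; hence L + z*_LP is a valid lower bound on the optimal value of the MIP. -/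
/-- If `L` lower-bounds the integer objective contribution of
every feasible MIP solution and `ρ` componentwise dominates `b − A_I x_I` for
every feasible solution, then `L + z*_LP` (with `z*_LP` the optimum of the
continuous LP with right-hand side `ρ`) is a valid lower bound on the optimal
value of the MIP. -/
theorem dd_lp_lower_bound_valid
    (m nI nC : ℕ) (cI : Fin nI → ℝ) (cC : Fin nC → ℝ)
    (AI : Matrix (Fin m) (Fin nI) ℝ) (AC : Matrix (Fin m) (Fin nC) ℝ)
    (b : Fin m → ℝ) (lbI ubI : Fin nI → ℤ) (lbC ubC : Fin nC → ℝ)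
    (feasible : (Fin nI → ℤ) → (Fin nC → ℝ) → Prop)
    (hfeas : ∀ xI xC, feasible xI xC ↔
      ((∀ i, (∑ j, AI i j * (xI j : ℝ)) + (∑ j, AC i j * xC j) ≤ b i) ∧
       (∀ j, lbI j ≤ xI j ∧ xI j ≤ ubI j) ∧
       (∀ j, lbC j ≤ xC j ∧ xC j ≤ ubC j)))
    (L : ℝ) (ρ : Fin m → ℝ)
    (hL : ∀ xI xC, feasible xI xC → L ≤ ∑ j, cI j * (xI j : ℝ))
    (hρ : ∀ xI xC, feasible xI xC →
      ∀ i, b i - (∑ j, AI i j * (xI j : ℝ)) ≤ ρ i)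
    (zLP : ℝ)
    (hzLP : zLP = sInf {v : ℝ | ∃ y : Fin nC → ℝ,
      (∀ i, ∑ j, AC i j * y j ≤ ρ i) ∧
      (∀ j, lbC j ≤ y j ∧ y j ≤ ubC j) ∧
      v = ∑ j, cC j * y j}) :
    ∀ xI xC, feasible xI xC →
      L + zLP ≤ (∑ j, cI j * (xI j : ℝ)) + (∑ j, cC j * xC j) := by
  intro xI xC hfx
  obtain ⟨hA, hIb, hCb⟩ := (hfeas xI xC).mp hfx
  -- xC is feasible for the LP
  have hACρ : ∀ i, ∑ j, AC i j * xC j ≤ ρ i := by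
    intro i
    have h1 := hA i
    have h2 := hρ xI xC hfx i
    linarith
  have hmem : (∑ j, cC j * xC j) ∈ {v : ℝ | ∃ y : Fin nC → ℝ,
      (∀ i, ∑ j, AC i j * y j ≤ ρ i) ∧
      (∀ j, lbC j ≤ y j ∧ y j ≤ ubC j) ∧
      v = ∑ j, cC j * y j} := ⟨xC, hACρ, hCb, rfl⟩
  have hbdd : BddBelow {v : ℝ | ∃ y : Fin nC → ℝ,
      (∀ i, ∑ j, AC i j * y j ≤ ρ i) ∧
      (∀ j, lbC j ≤ y j ∧ y j ≤ ubC j) ∧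
      v = ∑ j, cC j * y j} := by
    refine ⟨∑ j, min (cC j * lbC j) (cC j * ubC j), ?_⟩
    rintro v ⟨y, -, hy, rfl⟩
    apply Finset.sum_le_sum
    intro j _
    rcases le_or_gt 0 (cC j) with h | h
    · exact le_trans (min_le_left _ _) (mul_le_mul_of_nonneg_left (hy j).1 h)
    · exact le_trans (min_le_right _ _)
        (mul_le_mul_of_nonpos_left (hy j).2 h.le)
  have hz : zLP ≤ ∑ j, cC j * xC j := hzLP ▸ csInf_le hbdd hmem
  have hLx := hL xI xC hfx
  linarith
end
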